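/- arXiv:1202.2370 — 6 statements merged into one kernel-verified Lean document; each statement's English description precedes it below -/
import Mathlib

section
/- Let f₁, f₂ : ℕ → ℝ satisfy f₁(1) = 1, f₂(1) = 0, and for all n ≥ 1, f₁(n+1) = 2·f₁(n) + 4·f₂(n) and f₂(n+1) = 2·f₁(n) + 6·f₂(n). Then for all n ≥ 1, f₁(n) + f₂(n) = ((4 + 2·√3)^(n−1) + (4 − 2·√3)^(n−1)) / 2. -/
/-! The sum `f₁ + f₂` of the two coordinates of the linear system with matrix `[[2,4],[2,6]]`
satisfies, by Cayley–Hamilton, the scalar recurrence `g (k+2) = 8 g (k+1) - 4 g k`, whose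
characteristic roots are `4 ± 2√3`. The initial values `g 0 = 1`, `g 1 = 4` single out the
solution `(λ₁ ^ k + λ₂ ^ k) / 2`. -/

theorem linear_combination_add_two_of_linear_system {R : Type*} [CommRing R]
    {x y : ℕ → R} {a b c d : R}
    (hx : ∀ k, x (k + 1) = a * x k + b * y k) (hy : ∀ k, y (k + 1) = c * x k + d * y k)
    (p q : R) (k : ℕ) :
    p * x (k + 2) + q * y (k + 2) =
      (a + d) * (p * x (k + 1) + q * y (k + 1)) - (a * d - b * c) * (p * x k + q * y k) := by
  linear_combination p * hx (k + 1) + q * hy (k + 1) + (q * c - d * p) * hx k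
    + (p * b - a * q) * hy k

theorem eq_pow_add_pow_div_two_of_add_two {K : Type*} [Field K] [NeZero (2 : K)]
    {u : ℕ → K} {l m : K}
    (hrec : ∀ k, u (k + 2) = (l + m) * u (k + 1) - l * m * u k)
    (h0 : u 0 = 1) (h1 : u 1 = (l + m) / 2) (k : ℕ) :
    u k = (l ^ k + m ^ k) / 2 := by
  induction k using Nat.twoStepInduction with
  | zero => rw [h0]; field_simp; ring
  | one => rw [h1]; ring
  | more k ih₀ ih₁ => rw [hrec, ih₀, ih₁]; ring

theorem two_tree_line_count_closed_form
    (f₁ f₂ : ℕ → ℝ)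
    (h₁ : f₁ 1 = 1) (h₂ : f₂ 1 = 0)
    (hr₁ : ∀ n : ℕ, 1 ≤ n → f₁ (n + 1) = 2 * f₁ n + 4 * f₂ n)
    (hr₂ : ∀ n : ℕ, 1 ≤ n → f₂ (n + 1) = 2 * f₁ n + 6 * f₂ n) :
    ∀ n : ℕ, 1 ≤ n →
      f₁ n + f₂ n =
        ((4 + 2 * Real.sqrt 3) ^ (n - 1) + (4 - 2 * Real.sqrt 3) ^ (n - 1)) / 2 := by
  intro n hn
  obtain ⟨k, rfl⟩ : ∃ k, n = k + 1 := ⟨n - 1, by omega⟩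
  have hx (j : ℕ) : f₁ (j + 1 + 1) = 2 * f₁ (j + 1) + 4 * f₂ (j + 1) := hr₁ (j + 1) j.succ_pos
  have hy (j : ℕ) : f₂ (j + 1 + 1) = 2 * f₁ (j + 1) + 6 * f₂ (j + 1) := hr₂ (j + 1) j.succ_pos
  have hs : Real.sqrt 3 ^ 2 = 3 := Real.sq_sqrt (by norm_num)
  refine eq_pow_add_pow_div_two_of_add_two (u := fun j ↦ f₁ (j + 1) + f₂ (j + 1))
    (fun j ↦ ?_) (by simp [h₁, h₂]) (by simp only [hx 0, hy 0, h₁, h₂]; ring) k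
  have hsum := linear_combination_add_two_of_linear_system (x := fun j ↦ f₁ (j + 1))
    (y := fun j ↦ f₂ (j + 1)) hx hy 1 1 j
  linear_combination hsum - 4 * (f₁ (j + 1) + f₂ (j + 1)) * hs
end

section
/- Let f₁, f₂ : ℕ → ℝ satisfy f₁(1) = 1, f₂(1) = 0, and for all n ≥ 1, f₁(n+1) = 2·f₁(n) + 4·f₂(n) and f₂(n+1) = 2·f₁(n) + 6·f₂(n). Then for all n ≥ 0, f₁(n+1) = ((√3 − 1)/(2·√3))·(4 + 2·√3)^n + ((√3 + 1)/(2·√3))·(4 − 2·√3)^n. -/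
/-! The first coordinate of an orbit of `[[a, b], [c, d]]` satisfies the Cayley–Hamilton recurrence
`u (n + 2) = tr · u (n + 1) - det · u n`. For `[[2, 4], [2, 6]]` this is `u (n + 2) = 8 u (n + 1) - 4 u n`,
whose characteristic roots are `4 ± 2√3`; the coefficients of the closed form are fixed by
`f₁ 1 = 1` and `f₁ 2 = 2`. -/

theorem fst_add_two_eq_trace_mul_sub_det_mul {R : Type*} [CommRing R] {u v : ℕ → R}
    {a b c d : R} (hu : ∀ n, u (n + 1) = a * u n + b * v n)
    (hv : ∀ n, v (n + 1) = c * u n + d * v n) (n : ℕ) :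
    u (n + 2) = (a + d) * u (n + 1) - (a * d - b * c) * u n := by
  linear_combination hu (n + 1) + b * hv n - d * hu n

theorem eq_add_pow_of_two_step_rec {R : Type*} [CommRing R] {g : ℕ → R}
    {p q l m A B : R} (hl : l ^ 2 = p * l - q) (hm : m ^ 2 = p * m - q)
    (hrec : ∀ n, g (n + 2) = p * g (n + 1) - q * g n)
    (h0 : g 0 = A + B) (h1 : g 1 = A * l + B * m) (n : ℕ) :
    g n = A * l ^ n + B * m ^ n := by
  induction n using Nat.twoStepInduction with
  | zero => simpa using h0
  | one => simpa using h1
  | more n ih₀ ih₁ =>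
    rw [hrec, ih₀, ih₁]
    linear_combination (-(A * l ^ n)) * hl - B * m ^ n * hm

theorem two_tree_line_f1_closed_form
    (f₁ f₂ : ℕ → ℝ)
    (h₁ : f₁ 1 = 1) (h₂ : f₂ 1 = 0)
    (hr₁ : ∀ n : ℕ, 1 ≤ n → f₁ (n + 1) = 2 * f₁ n + 4 * f₂ n)
    (hr₂ : ∀ n : ℕ, 1 ≤ n → f₂ (n + 1) = 2 * f₁ n + 6 * f₂ n) :
    ∀ n : ℕ,
      f₁ (n + 1) =
        ((Real.sqrt 3 - 1) / (2 * Real.sqrt 3)) * (4 + 2 * Real.sqrt 3) ^ n +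
          ((Real.sqrt 3 + 1) / (2 * Real.sqrt 3)) * (4 - 2 * Real.sqrt 3) ^ n := by
  have hs : Real.sqrt 3 ^ 2 = 3 := Real.sq_sqrt (by norm_num)
  have hs₀ : Real.sqrt 3 ≠ 0 := by positivity
  have hrec := fst_add_two_eq_trace_mul_sub_det_mul (u := fun n => f₁ (n + 1))
    (v := fun n => f₂ (n + 1)) (fun n => hr₁ (n + 1) n.succ_pos) (fun n => hr₂ (n + 1) n.succ_pos)
  have hf₁_two : f₁ 2 = 2 := by rw [hr₁ 1 le_rfl, h₁, h₂]; norm_num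
  refine eq_add_pow_of_two_step_rec (g := fun n => f₁ (n + 1)) ?_ ?_ hrec ?_ ?_
  · linear_combination 4 * hs
  · linear_combination 4 * hs
  · rw [h₁]; field_simp; ring
  · rw [hf₁_two]; field_simp; ring
end

section
/- Let f₁, f₂ : ℕ → ℝ satisfy f₁(1) = 1, f₂(1) = 0, and for all n ≥ 1, f₁(n+1) = 2·f₁(n) + 4·f₂(n) and f₂(n+1) = 2·f₁(n) + 6·f₂(n). Then for all n ≥ 0, f₂(n+1) = (1/(2·√3))·(4 + 2·√3)^n − (1/(2·√3))·(4 − 2·√3)^n. -/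
/-!
Eliminating `f₁` shows that `f₂` satisfies the scalar recurrence whose characteristic polynomial
`X² - 8X + 4` is that of the transition matrix `[[2,4],[2,6]]` (Cayley–Hamilton). A solution of
`u (n+2) = (a+b) u (n+1) - ab u n` with `u 0 = 0` is `u 1 (aⁿ - bⁿ)/(a - b)`, and here
`a, b = 4 ± 2√3`, `a - b = 4√3`, `u 1 = f₂ 2 = 2`.
-/

section LinearRecurrence

variable {K : Type*} [Field K]

theorem snd_linear_system_recurrence (a b c d : K) (x y : ℕ → K)
    (hx : ∀ n, x (n + 1) = a * x n + b * y n) (hy : ∀ n, y (n + 1) = c * x n + d * y n)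
    (n : ℕ) : y (n + 2) = (a + d) * y (n + 1) - (a * d - b * c) * y n := by
  rw [hy (n + 1), hx n, hy n]
  ring

theorem mul_sub_eq_of_two_step_recurrence (a b : K) (u : ℕ → K) (h₀ : u 0 = 0)
    (hu : ∀ n, u (n + 2) = (a + b) * u (n + 1) - a * b * u n) (n : ℕ) :
    u n * (a - b) = u 1 * (a ^ n - b ^ n) := by
  induction n using Nat.twoStepInduction with
  | zero => simp [h₀]
  | one => ring
  | more n ih₀ ih₁ =>
    rw [hu, sub_mul, mul_assoc, ih₁, mul_assoc, mul_assoc, ih₀]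
    ring

end LinearRecurrence

theorem two_tree_line_f2_closed_form
    (f₁ f₂ : ℕ → ℝ)
    (h₁ : f₁ 1 = 1) (h₂ : f₂ 1 = 0)
    (hr₁ : ∀ n : ℕ, 1 ≤ n → f₁ (n + 1) = 2 * f₁ n + 4 * f₂ n)
    (hr₂ : ∀ n : ℕ, 1 ≤ n → f₂ (n + 1) = 2 * f₁ n + 6 * f₂ n) :
    ∀ n : ℕ,
      f₂ (n + 1) =
        (1 / (2 * Real.sqrt 3)) * (4 + 2 * Real.sqrt 3) ^ n -
          (1 / (2 * Real.sqrt 3)) * (4 - 2 * Real.sqrt 3) ^ n := by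
  intro n
  set s := Real.sqrt 3
  have hs : s ^ 2 = 3 := Real.sq_sqrt (by norm_num)
  have hs₀ : s ≠ 0 := by positivity
  have hrec (m : ℕ) : f₂ (m + 1 + 2) = (4 + 2 * s + (4 - 2 * s)) * f₂ (m + 1 + 1)
      - (4 + 2 * s) * (4 - 2 * s) * f₂ (m + 1) := by
    rw [snd_linear_system_recurrence 2 4 2 6 (fun k => f₁ (k + 1)) (fun k => f₂ (k + 1))
      (fun k => hr₁ (k + 1) (by omega)) (fun k => hr₂ (k + 1) (by omega)) m]
    linear_combination (-4 * f₂ (m + 1)) * hs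
  have hclosed := mul_sub_eq_of_two_step_recurrence _ _ (fun k => f₂ (k + 1)) h₂ hrec n
  rw [hr₂ 1 le_rfl, h₁, h₂] at hclosed
  field_simp
  linear_combination (1 / 2) * hclosed
end

section
/- For every natural number n ≥ 1, ((4 + 2·√3)^(n−1) + (4 − 2·√3)^(n−1)) / 2 ≤ (2^n)^(29/10), where the right-hand side is the real power 2^(29·n/10). -/
/-! Since `0 ≤ 4 - 2√3 ≤ 4 + 2√3`, the left-hand side is at most `(4 + 2√3)^(n-1)`, so it suffices
that `4 + 2√3 ≤ 2^(29/10)`. The margin is tiny (`7.46410… ≤ 7.46426…`); it is checked on tenth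
powers after bounding `√3` above by `1.7321`. -/

theorem add_pow_div_two_le_pow {α : Type*} [Field α] [LinearOrder α] [IsStrictOrderedRing α]
    {a b : α} (hb : 0 ≤ b) (hba : b ≤ a) (k : ℕ) : (a ^ k + b ^ k) / 2 ≤ a ^ k := by
  have := pow_le_pow_left₀ hb hba k
  linarith

theorem Real.le_rpow_div_of_pow_le {x y : ℝ} {m n : ℕ} (hx : 0 ≤ x) (hy : 0 ≤ y) (hn : n ≠ 0)
    (h : x ^ n ≤ y ^ m) : x ≤ y ^ ((m : ℝ) / n) :=
  calc x = (x ^ n) ^ (n⁻¹ : ℝ) := (Real.pow_rpow_inv_natCast hx hn).symm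
    _ ≤ (y ^ m) ^ (n⁻¹ : ℝ) := by gcongr
    _ = y ^ ((m : ℝ) / n) := by rw [div_eq_mul_inv, Real.rpow_natCast_mul hy]

theorem Real.sqrt_three_lt : √3 < 1.7321 := by
  rw [Real.sqrt_lt' (by norm_num)]
  norm_num

theorem four_add_two_sqrt_three_le : 4 + 2 * √3 ≤ (2 : ℝ) ^ ((29 : ℝ) / 10) := by
  have h : (4 + 2 * 1.7321 : ℝ) ≤ 2 ^ (((29 : ℕ) : ℝ) / (10 : ℕ)) :=
    Real.le_rpow_div_of_pow_le (by norm_num) (by norm_num) (by norm_num) (by norm_num)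
  norm_num at h
  linarith [Real.sqrt_three_lt]

theorem two_tree_line_count_poly_bound :
    ∀ n : ℕ, 1 ≤ n →
      ((4 + 2 * Real.sqrt 3) ^ (n - 1) + (4 - 2 * Real.sqrt 3) ^ (n - 1)) / 2 ≤
        ((2 : ℝ) ^ n) ^ ((29 : ℝ) / 10) := by
  intro n _
  have hs := Real.sqrt_three_lt
  calc ((4 + 2 * √3) ^ (n - 1) + (4 - 2 * √3) ^ (n - 1)) / 2
      ≤ (4 + 2 * √3) ^ (n - 1) :=
        add_pow_div_two_le_pow (by linarith) (by linarith [Real.sqrt_nonneg 3]) _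
    _ ≤ ((2 : ℝ) ^ ((29 : ℝ) / 10)) ^ (n - 1) :=
        pow_le_pow_left₀ (by positivity) four_add_two_sqrt_three_le _
    _ = ((2 : ℝ) ^ (n - 1)) ^ ((29 : ℝ) / 10) := Real.rpow_pow_comm (by norm_num) _ _
    _ ≤ ((2 : ℝ) ^ n) ^ ((29 : ℝ) / 10) := by gcongr <;> norm_num
end

section
/- For every n ≥ 2, the number of 2-tree-lines starting from the root whose last added node is at level n equals ((4 + 2·√3)^(n−1) + (4 − 2·√3)^(n−1)) / 2. That is, the number of finite sequences v₁, …, v_N (N ≥ 1) of pairwise distinct binary strings such that v₁ has length 1, v₂ is a child of the root or of v₁, v_{i+1} is a child of v_i or of v_{i−1} for every i ≥ 2, and the last string v_N has length n − 1, is ((4 + 2·√3)^(n−1) + (4 − 2·√3)^(n−1)) / 2. -/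
/-- `q` is a child of `p` in the infinite binary tree, nodes being encoded
as finite boolean strings (the root is the empty string). -/
def IsChild (p q : List Bool) : Prop := ∃ b : Bool, q = p ++ [b]

/-- A 2-tree-line starting from the root: a finite sequence `v₁, …, v_N` of
pairwise distinct binary strings such that `v₁` is a child of the root
(i.e. has length 1), `v₂` is a child of the root or of `v₁`, and each
`v_{i+1}` with `i ≥ 2` is a child of `v_i` or of `v_{i-1}`. -/
def IsTwoTreeLine (v : List (List Bool)) : Prop :=
  v.Nodup ∧
  (∀ h : 0 < v.length, (v.get ⟨0, h⟩).length = 1) ∧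
  (∀ h : 1 < v.length,
    IsChild [] (v.get ⟨1, h⟩) ∨
      IsChild (v.get ⟨0, by omega⟩) (v.get ⟨1, h⟩)) ∧
  (∀ i : ℕ, ∀ h : i + 2 < v.length,
    IsChild (v.get ⟨i + 1, by omega⟩) (v.get ⟨i + 2, h⟩) ∨
      IsChild (v.get ⟨i, by omega⟩) (v.get ⟨i + 2, h⟩))

/-!
A tree-line is built by appending one node at a time, each a child of the current last or
second-to-last node. Inductively, the last two nodes lie on the same level or the last one is one
level deeper, and all earlier nodes lie no deeper than the second-to-last one; so a new node can
only collide with the current last node. Classify lines by their last two nodes `p, q`: *child*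
(`q` is a child of `p`), *skew* (`q` is one level deeper than `p` but not its child) and *flat*
(same level). Appending a child of `q` gives a child line one level deeper (two ways, from any
line); appending a child of `p` turns a flat line into a skew line one level deeper (two ways), a
skew line into a flat one (two ways) and a child line into a flat one (one way: the sibling of
`q`). So the numbers `s m` of lines and `f m` of flat lines whose last node has length `m` satisfy
`s (m + 1) = 4 s m + 6 f m` and `f (m + 1) = 2 s m + 4 f m` for `m ≥ 1`, with `s 1 = 4` and
`f 1 = 2`; the matrix `!![4, 6; 2, 4]` has eigenvalues `4 ± 2√3`.
-/

lemma List.finite_length_le_of_forall_mem {α : Type*} {s : Set α} (hs : s.Finite) (n : ℕ) :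
    {l : List α | l.length ≤ n ∧ ∀ x ∈ l, x ∈ s}.Finite := by
  have := hs.to_subtype
  refine ((List.finite_length_le s n).image (List.map (↑))).subset ?_
  rintro l ⟨hl, hls⟩
  exact ⟨l.pmap (fun x hx => (⟨x, hx⟩ : s)) hls, by simpa using hl, by simp [List.map_pmap]⟩

lemma isChild_nil_iff {x : List Bool} : IsChild [] x ↔ x.length = 1 := by
  simp [IsChild, List.length_eq_one_iff]

lemma IsChild.length_eq {p q : List Bool} (h : IsChild p q) : q.length = p.length + 1 := by
  obtain ⟨b, rfl⟩ := h
  simp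

-- The root stands in for missing nodes, which makes the conditions on `v₁` and `v₂` instances
-- of the condition on later nodes.
def lastNode (v : List (List Bool)) : List Bool := v.getLastD []

def prevNode (v : List (List Bool)) : List Bool := lastNode v.dropLast

def IsChildOfLastTwo (v : List (List Bool)) (x : List Bool) : Prop :=
  IsChild (lastNode v) x ∨ IsChild (prevNode v) x

@[simp] lemma lastNode_nil : lastNode [] = [] := rfl

@[simp] lemma prevNode_nil : prevNode [] = [] := rfl

@[simp] lemma lastNode_append_singleton (v : List (List Bool)) (x : List Bool) :
    lastNode (v ++ [x]) = x := by
  simp [lastNode]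

@[simp] lemma prevNode_append_singleton (v : List (List Bool)) (x : List Bool) :
    prevNode (v ++ [x]) = lastNode v := by
  simp [prevNode]

lemma lastNode_take_succ {v : List (List Bool)} {k : ℕ} (hk : k < v.length) :
    lastNode (v.take (k + 1)) = v[k] := by
  rw [List.take_succ_eq_append_getElem hk, lastNode_append_singleton]

lemma prevNode_take_succ {v : List (List Bool)} {k : ℕ} (hk : k < v.length) :
    prevNode (v.take (k + 1)) = lastNode (v.take k) := by
  rw [List.take_succ_eq_append_getElem hk, prevNode_append_singleton]

lemma forall_mem_of_forall_mem_dropLast {v : List (List Bool)} {P : List Bool → Prop}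
    (h : ∀ y ∈ v.dropLast, P y) (hlast : P (lastNode v)) : ∀ y ∈ v, P y := by
  rcases v.eq_nil_or_concat' with rfl | ⟨u, z, rfl⟩
  · simp
  · simp only [List.dropLast_concat, lastNode_append_singleton] at h hlast
    simpa [or_imp, forall_and] using ⟨h, hlast⟩

lemma isTwoTreeLine_iff_forall_getElem {v : List (List Bool)} : IsTwoTreeLine v ↔
    v.Nodup ∧ ∀ k (hk : k < v.length), IsChildOfLastTwo (v.take k) v[k] := by
  simp only [IsTwoTreeLine, List.get_eq_getElem, IsChildOfLastTwo]
  refine and_congr_right fun _ => ⟨fun ⟨h0, h1, h2⟩ k hk => ?_, fun h => ⟨?_, ?_, ?_⟩⟩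
  · match k with
    | 0 => simpa [isChild_nil_iff] using h0 hk
    | 1 =>
      rw [lastNode_take_succ (by omega), prevNode_take_succ (by omega)]
      simpa [or_comm] using h1 hk
    | i + 2 =>
      rw [lastNode_take_succ (by omega), prevNode_take_succ (by omega),
        lastNode_take_succ (by omega)]
      exact h2 i hk
  · intro h0
    simpa [isChild_nil_iff] using h 0 h0
  · intro h1
    have := h 1 h1
    rw [lastNode_take_succ (by omega), prevNode_take_succ (by omega)] at this
    simpa [or_comm] using this
  · intro i h2
    have := h (i + 2) h2
    rwa [lastNode_take_succ (by omega), prevNode_take_succ (by omega),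
      lastNode_take_succ (by omega)] at this

lemma isTwoTreeLine_nil : IsTwoTreeLine [] := by
  simp [isTwoTreeLine_iff_forall_getElem]

lemma isTwoTreeLine_append_singleton {v : List (List Bool)} {x : List Bool} :
    IsTwoTreeLine (v ++ [x]) ↔ IsTwoTreeLine v ∧ x ∉ v ∧ IsChildOfLastTwo v x := by
  have old (k : ℕ) (hk : k < v.length) :
      IsChildOfLastTwo ((v ++ [x]).take k) ((v ++ [x])[k]'(by simp; omega)) ↔
        IsChildOfLastTwo (v.take k) v[k] := by
    rw [List.take_append_of_le_length hk.le, List.getElem_append_left hk]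
  have new : IsChildOfLastTwo ((v ++ [x]).take v.length) (v ++ [x])[v.length] ↔
      IsChildOfLastTwo v x := by
    simp
  have nodup : (v ++ [x]).Nodup ↔ x ∉ v ∧ v.Nodup := by
    rw [← List.concat_eq_append, List.nodup_concat]
  simp only [isTwoTreeLine_iff_forall_getElem, nodup, List.length_append, List.length_singleton]
  constructor
  · rintro ⟨⟨hx, hnd⟩, h⟩
    exact ⟨⟨hnd, fun k hk => (old k hk).1 (h k (by omega))⟩, hx, new.1 (h _ (by omega))⟩
  · rintro ⟨⟨hnd, h⟩, hx, hstep⟩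
    refine ⟨⟨hx, hnd⟩, fun k hk => ?_⟩
    rcases Nat.lt_succ_iff_lt_or_eq.1 hk with hk | rfl
    · exact (old k hk).2 (h k hk)
    · exact new.2 hstep

lemma IsTwoTreeLine.length_bounds {v : List (List Bool)} (hv : IsTwoTreeLine v) :
    (prevNode v).length ≤ (lastNode v).length ∧
      (lastNode v).length ≤ (prevNode v).length + 1 ∧
      (∀ y ∈ v.dropLast, y.length ≤ (prevNode v).length) ∧
      v.length ≤ (prevNode v).length + (lastNode v).length := by
  induction v using List.reverseRecOn with
  | nil => simp
  | append_singleton v x ih =>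
    obtain ⟨hv, -, hx⟩ := isTwoTreeLine_append_singleton.1 hv
    obtain ⟨h1, h2, h3, h4⟩ := ih hv
    have hx : (prevNode v).length + 1 ≤ x.length ∧ x.length ≤ (lastNode v).length + 1 := by
      rcases hx with hx | hx <;> (have := IsChild.length_eq hx; omega)
    simp only [lastNode_append_singleton, prevNode_append_singleton, List.dropLast_concat,
      List.length_append, List.length_singleton]
    refine ⟨by omega, by omega, forall_mem_of_forall_mem_dropLast (fun y hy => ?_) le_rfl,
      by omega⟩
    exact (h3 y hy).trans h1

lemma IsTwoTreeLine.append_singleton_iff {v : List (List Bool)} {x : List Bool}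
    (hv : IsTwoTreeLine v) :
    IsTwoTreeLine (v ++ [x]) ↔ IsChildOfLastTwo v x ∧ x ≠ lastNode v := by
  rw [isTwoTreeLine_append_singleton, and_iff_right hv, and_comm]
  refine and_congr_right fun hx => ?_
  obtain ⟨h1, -, h3, -⟩ := hv.length_bounds
  have hlen : (prevNode v).length + 1 ≤ x.length := by
    rcases hx with hx | hx <;> (have := IsChild.length_eq hx; omega)
  rcases v.eq_nil_or_concat' with rfl | ⟨u, z, rfl⟩
  · simp only [List.not_mem_nil, not_false_eq_true, lastNode_nil, ne_eq, true_iff]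
    rintro rfl
    simp at hlen
  · simp only [List.dropLast_concat, prevNode_append_singleton] at h3 hlen
    simp only [List.mem_append, List.mem_singleton, not_or, lastNode_append_singleton]
    exact and_iff_right_of_imp fun _ hxu => by have := h3 x hxu; omega

lemma IsTwoTreeLine.exists_eq_append {w : List (List Bool)} (hw : IsTwoTreeLine w)
    (hne : w ≠ []) :
    ∃ v x, w = v ++ [x] ∧ IsTwoTreeLine v ∧ IsChildOfLastTwo v x ∧ x ≠ lastNode v := by
  obtain ⟨v, x, rfl⟩ := w.eq_nil_or_concat'.resolve_left hne
  have hv := (isTwoTreeLine_append_singleton.1 hw).1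
  exact ⟨v, x, rfl, hv, hv.append_singleton_iff.1 hw⟩

lemma IsTwoTreeLine.lastNode_ne_prevNode {v : List (List Bool)} (hv : IsTwoTreeLine v)
    (hne : v ≠ []) : lastNode v ≠ prevNode v := by
  obtain ⟨u, x, rfl, -, -, hx⟩ := hv.exists_eq_append hne
  simpa using hx

def linesEndingAt (m : ℕ) : Set (List (List Bool)) :=
  {v | IsTwoTreeLine v ∧ (lastNode v).length = m}

def linesEndingChildAt (m : ℕ) : Set (List (List Bool)) :=
  {v ∈ linesEndingAt m | IsChild (prevNode v) (lastNode v)}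

def linesEndingSkewAt (m : ℕ) : Set (List (List Bool)) :=
  {v ∈ linesEndingAt m | (prevNode v).length + 1 = m ∧ ¬IsChild (prevNode v) (lastNode v)}

def linesEndingFlatAt (m : ℕ) : Set (List (List Bool)) :=
  {v ∈ linesEndingAt m | (prevNode v).length = m}

lemma ne_nil_of_mem_linesEndingAt {m : ℕ} {v : List (List Bool)} (hm : m ≠ 0)
    (hv : v ∈ linesEndingAt m) : v ≠ [] := by
  rintro rfl
  exact hm hv.2.symm

lemma linesEndingAt_zero : linesEndingAt 0 = {[]} := by
  refine Set.eq_singleton_iff_unique_mem.2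
    ⟨⟨isTwoTreeLine_nil, rfl⟩, fun v ⟨hv, h0⟩ => ?_⟩
  by_contra hne
  obtain ⟨u, x, rfl, -, hx, -⟩ := hv.exists_eq_append hne
  rcases hx with hx | hx <;> (have := IsChild.length_eq hx; simp_all)

lemma linesEndingSkewAt_one : linesEndingSkewAt 1 = ∅ := by
  refine Set.eq_empty_of_forall_notMem fun v ⟨⟨_, hlast⟩, hprev, hnc⟩ => hnc ?_
  rw [List.eq_nil_of_length_eq_zero (by omega : (prevNode v).length = 0), isChild_nil_iff]
  exact hlast

lemma linesEndingAt_finite (m : ℕ) : (linesEndingAt m).Finite := by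
  refine (List.finite_length_le_of_forall_mem (List.finite_length_le Bool m) (2 * m)).subset ?_
  rintro v ⟨hv, rfl⟩
  obtain ⟨h1, -, h3, h4⟩ := hv.length_bounds
  exact ⟨by omega, forall_mem_of_forall_mem_dropLast
    (P := fun y => y.length ≤ (lastNode v).length) (fun y hy => (h3 y hy).trans h1) le_rfl⟩

instance (m : ℕ) : Finite (linesEndingAt m) := (linesEndingAt_finite m).to_subtype

instance (m : ℕ) : Finite (linesEndingChildAt m) := Finite.Set.subset _ fun _ hv => hv.1

instance (m : ℕ) : Finite (linesEndingSkewAt m) := Finite.Set.subset _ fun _ hv => hv.1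

instance (m : ℕ) : Finite (linesEndingFlatAt m) := Finite.Set.subset _ fun _ hv => hv.1

lemma card_linesEndingAt (m : ℕ) :
    Nat.card (linesEndingAt m) = Nat.card (linesEndingChildAt m) +
      Nat.card (linesEndingSkewAt m) + Nat.card (linesEndingFlatAt m) := by
  have hsplit : linesEndingAt m =
      linesEndingChildAt m ∪ linesEndingSkewAt m ∪ linesEndingFlatAt m := by
    ext v
    refine ⟨fun hv => ?_, by rintro ((hv | hv) | hv) <;> exact hv.1⟩
    obtain ⟨h1, h2, -, -⟩ := hv.1.length_bounds
    have hlast := hv.2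
    by_cases hc : IsChild (prevNode v) (lastNode v)
    · exact .inl (.inl ⟨hv, hc⟩)
    by_cases hl : (prevNode v).length = m
    · exact .inr ⟨hv, hl⟩
    · exact .inl (.inr ⟨hv, by omega, hc⟩)
  have hdisj₁ : Disjoint (linesEndingChildAt m) (linesEndingSkewAt m) :=
    Set.disjoint_left.2 fun _ hc hs => hs.2.2 hc.2
  have hdisj₂ :
      Disjoint (linesEndingChildAt m ∪ linesEndingSkewAt m) (linesEndingFlatAt m) := by
    refine Set.disjoint_left.2 fun v hv hf => ?_
    have hprev : (prevNode v).length = m := hf.2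
    rcases hv with hc | hs
    · have := IsChild.length_eq hc.2
      have := hc.1.2
      omega
    · have := hs.2.1
      omega
  simp only [Nat.card_coe_set_eq, hsplit, Set.ncard_union_eq hdisj₂, Set.ncard_union_eq hdisj₁]

lemma card_linesEndingChildAt_succ (m : ℕ) :
    Nat.card (linesEndingChildAt (m + 1)) = 2 * Nat.card (linesEndingAt m) := by
  let f : linesEndingAt m × Bool → linesEndingChildAt (m + 1) := fun p =>
    ⟨p.1.1 ++ [lastNode p.1.1 ++ [p.2]], by
      obtain ⟨⟨v, hv, hm⟩, c⟩ := p
      exact ⟨⟨hv.append_singleton_iff.2 ⟨.inl ⟨c, rfl⟩, by simp⟩, by simp [hm]⟩,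
        by simp [IsChild]⟩⟩
  have hf : Function.Bijective f := by
    refine ⟨fun ⟨⟨v, _⟩, c⟩ ⟨⟨v', _⟩, c'⟩ h => ?_,
      fun ⟨w, ⟨hw, hm⟩, hc⟩ => ?_⟩
    · simp only [f, Subtype.mk.injEq, List.append_singleton_inj] at h
      obtain ⟨rfl, -, rfl⟩ := h
      rfl
    · obtain ⟨v, x, rfl, hv, -, -⟩ :=
        hw.exists_eq_append (ne_nil_of_mem_linesEndingAt (by omega) ⟨hw, hm⟩)
      simp only [lastNode_append_singleton, prevNode_append_singleton] at hm hc
      obtain ⟨c, rfl⟩ := hc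
      exact ⟨(⟨v, hv, by simpa using hm⟩, c), rfl⟩
  rw [← Nat.card_congr (Equiv.ofBijective f hf), Nat.card_prod,
    Nat.card_eq_fintype_card (α := Bool), Fintype.card_bool, mul_comm]

lemma card_linesEndingSkewAt_succ {m : ℕ} (hm : m ≠ 0) :
    Nat.card (linesEndingSkewAt (m + 1)) = 2 * Nat.card (linesEndingFlatAt m) := by
  let f : linesEndingFlatAt m × Bool → linesEndingSkewAt (m + 1) := fun p =>
    ⟨p.1.1 ++ [prevNode p.1.1 ++ [p.2]], by
      obtain ⟨⟨v, ⟨hv, hlast⟩, hprev⟩, c⟩ := p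
      have hne := hv.lastNode_ne_prevNode (ne_nil_of_mem_linesEndingAt hm ⟨hv, hlast⟩)
      refine ⟨⟨hv.append_singleton_iff.2 ⟨.inr ⟨c, rfl⟩, ?_⟩, by simp [hprev]⟩,
        by simp [hlast], ?_⟩
      · intro h
        have := congrArg List.length h
        simp [hprev, hlast] at this
      · rintro ⟨b, hb⟩
        simp only [prevNode_append_singleton, lastNode_append_singleton] at hb
        exact hne (List.append_singleton_inj.1 hb).1.symm⟩
  have hf : Function.Bijective f := by
    refine ⟨fun ⟨⟨v, _⟩, c⟩ ⟨⟨v', _⟩, c'⟩ h => ?_,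
      fun ⟨w, ⟨hw, hm⟩, hprev, hc⟩ => ?_⟩
    · simp only [f, Subtype.mk.injEq, List.append_singleton_inj] at h
      obtain ⟨rfl, -, rfl⟩ := h
      rfl
    · obtain ⟨v, x, rfl, hv, hx, -⟩ :=
        hw.exists_eq_append (ne_nil_of_mem_linesEndingAt (by omega) ⟨hw, hm⟩)
      simp only [lastNode_append_singleton, prevNode_append_singleton] at hm hprev hc
      obtain ⟨c, rfl⟩ := hx.resolve_left hc
      exact ⟨(⟨v, ⟨hv, by omega⟩, by simpa using hm⟩, c), rfl⟩
  rw [← Nat.card_congr (Equiv.ofBijective f hf), Nat.card_prod,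
    Nat.card_eq_fintype_card (α := Bool), Fintype.card_bool, mul_comm]

def sibling (x : List Bool) : List Bool := x.dropLast ++ [!x.getLastD false]

@[simp] lemma sibling_append_singleton (p : List Bool) (c : Bool) :
    sibling (p ++ [c]) = p ++ [!c] := by
  simp [sibling]

lemma append_sibling_mem_linesEndingFlatAt {m : ℕ} {v : List (List Bool)}
    (hv : v ∈ linesEndingChildAt m) : v ++ [sibling (lastNode v)] ∈ linesEndingFlatAt m := by
  obtain ⟨⟨hv, hlast⟩, c, hc⟩ := hv
  have hsib : sibling (lastNode v) = prevNode v ++ [!c] := by simp [hc]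
  refine ⟨⟨hv.append_singleton_iff.2 ⟨.inr ⟨!c, hsib⟩, by simp [hc]⟩, ?_⟩, ?_⟩ <;>
    simpa [hsib, hc] using hlast

lemma append_child_prevNode_mem_linesEndingFlatAt {m : ℕ} {v : List (List Bool)}
    (hv : v ∈ linesEndingSkewAt m) (c : Bool) :
    v ++ [prevNode v ++ [c]] ∈ linesEndingFlatAt m := by
  obtain ⟨⟨hv, hlast⟩, hprev, hnc⟩ := hv
  have hline := hv.append_singleton_iff.2 ⟨.inr ⟨c, rfl⟩, fun h => hnc ⟨c, h.symm⟩⟩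
  refine ⟨⟨hline, ?_⟩, ?_⟩ <;> simpa

lemma exists_of_mem_linesEndingFlatAt {m : ℕ} {w : List (List Bool)} (hm : m ≠ 0)
    (hw : w ∈ linesEndingFlatAt m) :
    ∃ v, (v ∈ linesEndingChildAt m ∧ w = v ++ [sibling (lastNode v)]) ∨
      ∃ c, v ∈ linesEndingSkewAt m ∧ w = v ++ [prevNode v ++ [c]] := by
  obtain ⟨⟨hw, hlast⟩, hprev⟩ := hw
  obtain ⟨v, x, rfl, hv, hx, hxne⟩ :=
    hw.exists_eq_append (ne_nil_of_mem_linesEndingAt hm ⟨hw, hlast⟩)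
  simp only [lastNode_append_singleton, prevNode_append_singleton] at hlast hprev
  obtain ⟨c, rfl⟩ := hx.resolve_left fun h => by have := IsChild.length_eq h; omega
  refine ⟨v, ?_⟩
  by_cases hc : IsChild (prevNode v) (lastNode v)
  · obtain ⟨c', hc'⟩ := hc
    refine .inl ⟨⟨⟨hv, hprev⟩, c', hc'⟩, ?_⟩
    rw [hc'] at hxne ⊢
    cases c <;> cases c' <;> simp_all
  · exact .inr ⟨c, ⟨⟨hv, hprev⟩, by simpa using hlast, hc⟩, rfl⟩

lemma card_linesEndingFlatAt {m : ℕ} (hm : m ≠ 0) :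
    Nat.card (linesEndingFlatAt m) =
      Nat.card (linesEndingChildAt m) + 2 * Nat.card (linesEndingSkewAt m) := by
  let f : linesEndingChildAt m ⊕ linesEndingSkewAt m × Bool → linesEndingFlatAt m
    | .inl v => ⟨v.1 ++ [sibling (lastNode v.1)], append_sibling_mem_linesEndingFlatAt v.2⟩
    | .inr (v, c) =>
      ⟨v.1 ++ [prevNode v.1 ++ [c]], append_child_prevNode_mem_linesEndingFlatAt v.2 c⟩
  have hf : Function.Bijective f := by
    refine ⟨?_, fun ⟨w, hw⟩ => ?_⟩
    · rintro (⟨v, hv⟩ | ⟨⟨v, hv⟩, c⟩) (⟨v', hv'⟩ | ⟨⟨v', hv'⟩, c'⟩) h <;>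
        simp only [f, Subtype.mk.injEq, List.append_singleton_inj] at h <;> obtain ⟨rfl, h⟩ := h
      · rfl
      · exact (hv'.2.2 hv.2).elim
      · exact (hv.2.2 hv'.2).elim
      · obtain ⟨-, rfl⟩ := h
        rfl
    · obtain ⟨v, ⟨hv, rfl⟩ | ⟨c, hv, rfl⟩⟩ := exists_of_mem_linesEndingFlatAt hm hw
      exacts [⟨.inl ⟨v, hv⟩, rfl⟩, ⟨.inr (⟨v, hv⟩, c), rfl⟩]
  rw [← Nat.card_congr (Equiv.ofBijective f hf), Nat.card_sum, Nat.card_prod,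
    Nat.card_eq_fintype_card (α := Bool), Fintype.card_bool, mul_comm]

lemma card_linesEndingChildAt_one : Nat.card (linesEndingChildAt 1) = 2 := by
  simpa [linesEndingAt_zero] using card_linesEndingChildAt_succ 0

lemma card_linesEndingFlatAt_one : Nat.card (linesEndingFlatAt 1) = 2 := by
  rw [card_linesEndingFlatAt one_ne_zero, card_linesEndingChildAt_one, linesEndingSkewAt_one]
  simp

lemma card_linesEndingAt_one : Nat.card (linesEndingAt 1) = 4 := by
  rw [card_linesEndingAt, card_linesEndingChildAt_one, linesEndingSkewAt_one,
    card_linesEndingFlatAt_one]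
  simp

lemma card_linesEndingAt_succ {m : ℕ} (hm : m ≠ 0) :
    Nat.card (linesEndingAt (m + 1)) =
      4 * Nat.card (linesEndingAt m) + 6 * Nat.card (linesEndingFlatAt m) := by
  rw [card_linesEndingAt, card_linesEndingFlatAt m.succ_ne_zero, card_linesEndingChildAt_succ,
    card_linesEndingSkewAt_succ hm]
  ring

lemma card_linesEndingFlatAt_succ {m : ℕ} (hm : m ≠ 0) :
    Nat.card (linesEndingFlatAt (m + 1)) =
      2 * Nat.card (linesEndingAt m) + 4 * Nat.card (linesEndingFlatAt m) := by
  rw [card_linesEndingFlatAt m.succ_ne_zero, card_linesEndingChildAt_succ,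
    card_linesEndingSkewAt_succ hm]
  ring

lemma closed_form_of_recurrence {a b : ℕ → ℕ} (ha₁ : a 1 = 4) (hb₁ : b 1 = 2)
    (ha : ∀ m ≠ 0, a (m + 1) = 4 * a m + 6 * b m)
    (hb : ∀ m ≠ 0, b (m + 1) = 2 * a m + 4 * b m)
    {m : ℕ} (hm : m ≠ 0) :
    (a m : ℝ) = ((4 + 2 * √3) ^ m + (4 - 2 * √3) ^ m) / 2 := by
  have h3 : √3 ^ 2 = 3 := Real.sq_sqrt (by norm_num)
  suffices (a m : ℝ) = ((4 + 2 * √3) ^ m + (4 - 2 * √3) ^ m) / 2 ∧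
      (b m : ℝ) * (2 * √3) = (4 + 2 * √3) ^ m - (4 - 2 * √3) ^ m from this.1
  induction m, Nat.one_le_iff_ne_zero.2 hm using Nat.le_induction with
  | base => simp only [ha₁, hb₁]; constructor <;> push_cast <;> ring
  | succ m hm ih =>
    obtain ⟨iha, ihb⟩ := ih (by omega)
    rw [ha m (by omega), hb m (by omega)]
    push_cast
    constructor
    · linear_combination 4 * iha + √3 * ihb - 2 * (b m : ℝ) * h3
    · linear_combination 4 * √3 * iha + 4 * ihb

theorem count_two_tree_lines_ending_at_level (n : ℕ) (hn : 2 ≤ n) :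
    (Nat.card {v : List (List Bool) //
        IsTwoTreeLine v ∧ ∃ l : List Bool, v.getLast? = some l ∧ l.length = n - 1} : ℝ) =
      ((4 + 2 * Real.sqrt 3) ^ (n - 1) + (4 - 2 * Real.sqrt 3) ^ (n - 1)) / 2 := by
  have hm : n - 1 ≠ 0 := by omega
  have hlast (v : List (List Bool)) :
      (∃ l : List Bool, v.getLast? = some l ∧ l.length = n - 1) ↔
        (lastNode v).length = n - 1 := by
    rcases v.eq_nil_or_concat' with rfl | ⟨u, x, rfl⟩
    · simpa using hm.symm
    · simp
  rw [Nat.card_congr (Equiv.subtypeEquivRight fun v => and_congr_right' (hlast v))]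
  exact closed_form_of_recurrence (a := fun m => Nat.card (linesEndingAt m))
    (b := fun m => Nat.card (linesEndingFlatAt m)) card_linesEndingAt_one
    card_linesEndingFlatAt_one (fun _ => card_linesEndingAt_succ)
    (fun _ => card_linesEndingFlatAt_succ) hm
end

section
/- (Proposition 3.5) Let ι be a finite index type, let t : ι → Finset α be a family of finite sets (the data trees), let Q be a finite subset of α, and let P : ι → Finset α satisfy P i ⊆ Q for every i. Then ∑_i ( |t i \ P i| + |P i \ t i| ) ≥ ∑_i |t i| − ∑_{v ∈ Q} w(v), where w(v) = |{ i : v ∈ t i }| is the weight of v, i.e., the number of data trees containing v. In particular, taking Q to be the 2-path of a maximal 2-tree-line K* extending a partial 2-tree-line K and P i = P_{K*}(t i) the projections, since the maximum 2-path MP(K) satisfies ∑_{v ∈ MP(K)} w(v) ≥ ∑_{v ∈ Q} w(v), the quantity ∑_i |t i| − ∑_{v ∈ MP(K)} w(v) is a lower bound on the objective value ∑_i d(t i, P_{K*}(t i)) of every maximal 2-tree-line extended from K. -/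
/-!
Projecting onto a subset of `Q` can only keep nodes of `Q`, so each `t i` loses at least its
nodes outside `Q`: `d(t i, P i) ≥ |t i \ Q| = |t i| - |t i ∩ Q|`. Summing over `i` and counting
the pairs `(i, v)` with `v ∈ t i ∩ Q` by `v` instead of by `i` turns `∑ i, |t i ∩ Q|` into
`∑ v ∈ Q, w v`.
-/

open Finset

namespace Finset

variable {ι α : Type*} [DecidableEq α]

theorem sum_card_filter_mem_eq_sum_card_inter (s : Finset ι) (t : ι → Finset α) (Q : Finset α) :
    ∑ v ∈ Q, #{i ∈ s | v ∈ t i} = ∑ i ∈ s, #(t i ∩ Q) := by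
  simpa only [bipartiteAbove, bipartiteBelow, filter_mem_eq_inter, inter_comm] using
    sum_card_bipartiteAbove_eq_sum_card_bipartiteBelow (s := Q) (t := s) (fun v i => v ∈ t i)

theorem card_sub_card_inter_le_card_sdiff_add_card_sdiff {t P Q : Finset α} (hPQ : P ⊆ Q) :
    (#t : ℤ) - #(t ∩ Q) ≤ #(t \ P) + #(P \ t) := by
  have hsplit := card_sdiff_add_card_inter t Q
  have hmono : #(t \ Q) ≤ #(t \ P) := card_le_card (sdiff_subset_sdiff le_rfl hPQ)
  omega

end Finset

/-- Proposition 3.5 (core inequality): for data trees `t i` (finite node sets),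
a finite node set `Q` (e.g. the 2-path of a maximal 2-tree-line), and
node sets `P i ⊆ Q` (e.g. the projections onto that 2-tree-line), the total
Hamming distance `∑ i, d(t i, P i)` is at least
`∑ i, |t i| - ∑_{v ∈ Q} w v`, where `w v` is the number of data trees
containing the node `v`. -/
theorem two_path_weight_lower_bound {ι α : Type*} [Fintype ι] [DecidableEq α]
    (t : ι → Finset α) (Q : Finset α) (P : ι → Finset α)
    (hP : ∀ i, P i ⊆ Q) :
    (∑ i, (((t i \ P i).card : ℤ) + ((P i \ t i).card : ℤ))) ≥
      (∑ i, ((t i).card : ℤ)) -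
        ∑ v ∈ Q, ((Finset.univ.filter fun i => v ∈ t i).card : ℤ) := by
  have hweight : ∑ v ∈ Q, ((univ.filter fun i => v ∈ t i).card : ℤ) = ∑ i, (#(t i ∩ Q) : ℤ) := by
    exact_mod_cast sum_card_filter_mem_eq_sum_card_inter univ t Q
  calc (∑ i, (#(t i) : ℤ)) - ∑ v ∈ Q, ((univ.filter fun i => v ∈ t i).card : ℤ)
      = ∑ i, ((#(t i) : ℤ) - #(t i ∩ Q)) := by rw [hweight, sum_sub_distrib]
    _ ≤ ∑ i, ((#(t i \ P i) : ℤ) + #(P i \ t i)) :=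
      sum_le_sum fun i _ => card_sub_card_inter_le_card_sdiff_add_card_sdiff (hP i)
end
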